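/- Let ε ∈ [0,1) and M, N > 1. Then there exists a CPTP map F from 2×2 complex matrices to 2×2 complex matrices satisfying F(π_M) = π_N and T(F(|1⟩⟨1|), |1⟩⟨1|) ≤ ε, if and only if M ≥ N(1−ε). -/

import Mathlib

open Matrix ComplexOrder

/-- Trace norm of a complex matrix: the trace of `sqrt(AᴴA)` (sum of singular values). -/
noncomputable def traceNorm {n : Type*} [Fintype n] [DecidableEq n]
    (A : Matrix n n ℂ) : ℝ :=
  ((((Matrix.posSemidef_conjTranspose_mul_self A).1.eigenvectorUnitary : Matrix n n ℂ) *
      Matrix.diagonal ((RCLike.ofReal : ℝ → ℂ) ∘ (Real.sqrt ·) ∘ (Matrix.posSemidef_conjTranspose_mul_self A).1.eigenvalues) *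
      (star (Matrix.posSemidef_conjTranspose_mul_self A).1.eigenvectorUnitary : Matrix n n ℂ)).trace).re

/-- Trace distance `T(X,Y) = ‖X - Y‖₁ / 2`. -/
noncomputable def traceDist {n : Type*} [Fintype n] [DecidableEq n]
    (X Y : Matrix n n ℂ) : ℝ :=
  traceNorm (X - Y) / 2

/-- A density matrix: positive semidefinite with unit trace. -/
def IsDensityMatrix {n : Type*} [Fintype n] (ρ : Matrix n n ℂ) : Prop :=
  ρ.PosSemidef ∧ ρ.trace = 1

/-- The battery Gibbs state `π_M = diag(1 - 1/M, 1/M)`. -/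
noncomputable def piM (M : ℝ) : Matrix (Fin 2) (Fin 2) ℂ :=
  Matrix.diagonal ![((1 - 1/M : ℝ) : ℂ), ((1/M : ℝ) : ℂ)]

/-- The excited battery state `|1⟩⟨1| = diag(0,1)`. -/
def ket1 : Matrix (Fin 2) (Fin 2) ℂ :=
  Matrix.diagonal ![0, 1]

/-- A test (POVM effect): `0 ≤ E ≤ I`. -/
def IsTest {n : Type*} [Fintype n] [DecidableEq n] (E : Matrix n n ℂ) : Prop :=
  E.PosSemidef ∧ (1 - E).PosSemidef

/-- Choi matrix `Σ_{ij} E_{ij} ⊗ F(E_{ij})` of a linear map on matrices. -/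
noncomputable def choiMatrix {n m : Type*} [Fintype n] [DecidableEq n] [Fintype m]
    (F : Matrix n n ℂ →ₗ[ℂ] Matrix m m ℂ) :
    Matrix (n × m) (n × m) ℂ :=
  fun p q => F (Matrix.single p.1 q.1 1) p.2 q.2

/-- Completely positive (positive semidefinite Choi matrix) and trace preserving. -/
def IsCPTP {n m : Type*} [Fintype n] [DecidableEq n] [Fintype m]
    (F : Matrix n n ℂ →ₗ[ℂ] Matrix m m ℂ) : Prop :=
  (choiMatrix F).PosSemidef ∧ ∀ X, (F X).trace = X.trace

/-- `n`-fold Kronecker (tensor) power of a `2 × 2` matrix, indexed by bit strings. -/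
def tensPow (A : Matrix (Fin 2) (Fin 2) ℂ) (n : ℕ) :
    Matrix (Fin n → Fin 2) (Fin n → Fin 2) ℂ :=
  fun x y => ∏ i, A (x i) (y i)

/-- `ε`-ball (in trace distance) of density matrices around a set `𝓟`. -/
noncomputable def metBall {n : Type*} [Fintype n] [DecidableEq n]
    (ε : ℝ) (P : Set (Matrix n n ℂ)) : Set (Matrix n n ℂ) :=
  {ω | IsDensityMatrix ω ∧ ∃ ρ ∈ P, traceDist ω ρ ≤ ε}

/-! Since `M • π_M - |1⟩⟨1| = diag(M - 1, 0) ≥ 0`, positivity of `F` gives `F |1⟩⟨1| ≤ M • π_N`, so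
the excited population of `F |1⟩⟨1|` is at most `M / N`; and the trace distance of a unit-trace
Hermitian `σ` to `|1⟩⟨1|` is at least `1 - σ₁₁`. Hence `1 - ε ≤ M / N`. Conversely, dephasing
followed by the stochastic matrix `!![a, 1 - a; t, 1 - t]`, with `t = max 0 (1 - M / N)` and `a`
fixed by `F π_M = π_N`, sends `|1⟩⟨1|` to `diag(t, 1 - t)`, at trace distance `t ≤ ε`. -/

section Choi

variable {n m : Type*} [Fintype n] [DecidableEq n] [Fintype m]
  (F : Matrix n n ℂ →ₗ[ℂ] Matrix m m ℂ)

lemma apply_eq_sum_mul_choiMatrix (X : Matrix n n ℂ) (a b : m) :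
    F X a b = ∑ i, ∑ j, X i j * choiMatrix F (i, a) (j, b) := by
  conv_lhs => rw [matrix_eq_sum_single X]
  simp only [map_sum, Matrix.sum_apply]
  refine Finset.sum_congr rfl fun i _ => Finset.sum_congr rfl fun j _ => ?_
  rw [show single i j (X i j) = X i j • single i j (1 : ℂ) by simp [smul_single],
    _root_.map_smul]
  rfl

lemma isHermitian_map_of_isHermitian_choiMatrix (hC : (choiMatrix F).IsHermitian)
    {X : Matrix n n ℂ} (hX : X.IsHermitian) : (F X).IsHermitian := by
  ext a b
  rw [conjTranspose_apply, apply_eq_sum_mul_choiMatrix, apply_eq_sum_mul_choiMatrix,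
    Finset.sum_comm]
  simp only [star_sum, star_mul', hX.apply, hC.apply]

lemma posSemidef_map_vecMulVec_of_posSemidef_choiMatrix (hC : (choiMatrix F).PosSemidef)
    (v : n → ℂ) : (F (vecMulVec v (star v))).PosSemidef := by
  refine .of_dotProduct_mulVec_nonneg (isHermitian_map_of_isHermitian_choiMatrix F hC.1
    (posSemidef_vecMulVec_self_star v).1) fun y => ?_
  convert hC.dotProduct_mulVec_nonneg (fun p : n × m => star (v p.1) * y p.2) using 1
  simp only [dotProduct, mulVec, Pi.star_apply, Fintype.sum_prod_type, apply_eq_sum_mul_choiMatrix,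
    vecMulVec_apply, Finset.sum_mul, Finset.mul_sum, star_mul', star_star]
  conv_lhs => enter [2, a]; rw [Finset.sum_comm]
  conv_lhs => rw [Finset.sum_comm]; enter [2, i, 2, a]; rw [Finset.sum_comm]
  refine Finset.sum_congr rfl fun _ _ => Finset.sum_congr rfl fun _ _ =>
    Finset.sum_congr rfl fun _ _ => Finset.sum_congr rfl fun _ _ => by ring

lemma posSemidef_map_of_posSemidef_choiMatrix (hC : (choiMatrix F).PosSemidef)
    {X : Matrix n n ℂ} (hX : X.PosSemidef) : (F X).PosSemidef := by
  obtain ⟨k, v, rfl⟩ := posSemidef_iff_eq_sum_vecMulVec.mp hX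
  rw [map_sum]
  exact posSemidef_sum _ fun i _ => posSemidef_map_vecMulVec_of_posSemidef_choiMatrix F hC (v i)

end Choi

section ClassicalChannel

variable {n m : Type*} [Fintype n] [DecidableEq m]

noncomputable def classicalChannel (P : Matrix n m ℝ) : Matrix n n ℂ →ₗ[ℂ] Matrix m m ℂ :=
  diagonalLinearMap m ℂ ℂ ∘ₗ (P.map (↑)).vecMulLinear ∘ₗ diagLinearMap n ℂ ℂ

lemma classicalChannel_apply (P : Matrix n m ℝ) (X : Matrix n n ℂ) :
    classicalChannel P X = diagonal (diag X ᵥ* P.map (↑)) :=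
  rfl

lemma choiMatrix_classicalChannel [DecidableEq n] [Fintype m] (P : Matrix n m ℝ) :
    choiMatrix (classicalChannel P) = diagonal fun p => (P p.1 p.2 : ℂ) := by
  ext ⟨i, a⟩ ⟨j, b⟩
  by_cases hij : i = j <;> by_cases hab : a = b <;>
    simp [choiMatrix, classicalChannel_apply, hij, hab]

lemma isCPTP_classicalChannel [DecidableEq n] [Fintype m] {P : Matrix n m ℝ}
    (hP : ∀ i j, 0 ≤ P i j) (hrow : ∀ i, ∑ j, P i j = 1) : IsCPTP (classicalChannel P) := by
  refine ⟨?_, fun X => ?_⟩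
  · rw [choiMatrix_classicalChannel]
    exact .diagonal fun p => Complex.zero_le_real.mpr (hP p.1 p.2)
  · simp only [classicalChannel_apply, trace_diagonal, vecMul, dotProduct]
    rw [Finset.sum_comm]
    simp [← Finset.mul_sum, ← Complex.ofReal_sum, hrow, trace]

lemma classicalChannel_diagonal_ofReal [DecidableEq n] (P : Matrix n m ℝ) (p : n → ℝ) :
    classicalChannel P (diagonal fun i => (p i : ℂ)) = diagonal fun j => ((p ᵥ* P) j : ℂ) := by
  simp [classicalChannel_apply, vecMul, dotProduct]

end ClassicalChannel

lemma traceNorm_of_conjTranspose_mul_self_eq_smul_one {n : Type*} [Fintype n] [DecidableEq n]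
    {A : Matrix n n ℂ} {d : ℝ} (h : Aᴴ * A = (d : ℂ) • 1) :
    traceNorm A = Fintype.card n * √d := by
  set hH := (posSemidef_conjTranspose_mul_self A).1
  have hmulVec : ∀ w, (Aᴴ * A) *ᵥ w = (d : ℂ) • w := fun w => by
    rw [h, smul_mulVec, one_mulVec]
  have hev : ∀ i, hH.eigenvalues i = d := fun i => by
    rw [hH.eigenvalues_eq i, hmulVec, dotProduct_smul, dotProduct_comm,
      ← EuclideanSpace.inner_eq_star_dotProduct, inner_self_eq_norm_sq_to_K,
      hH.eigenvectorBasis.orthonormal.1 i]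
    simp
  rw [traceNorm, trace_mul_cycle, Unitary.coe_star_mul_self, one_mul, trace_diagonal]
  simp [hev]

lemma traceNorm_of_isHermitian_of_trace_eq_zero {A : Matrix (Fin 2) (Fin 2) ℂ}
    (hA : A.IsHermitian) (htr : A.trace = 0) :
    traceNorm A = 2 * √((A 0 0).re ^ 2 + Complex.normSq (A 0 1)) := by
  have h11 : A 1 1 = -A 0 0 := by
    rw [trace_fin_two] at htr
    linear_combination htr
  have h10 : A 1 0 = star (A 0 1) := by rw [← hA.apply]
  have h00 : ((A 0 0).re : ℂ) = A 0 0 := hA.coe_re_apply_self 0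
  have hsq : Aᴴ * A = (((A 0 0).re ^ 2 + Complex.normSq (A 0 1) : ℝ) : ℂ) • 1 := by
    rw [hA.eq]
    ext i j
    fin_cases i <;> fin_cases j <;>
      simp [Matrix.mul_apply, Fin.sum_univ_two, h11, h10, ← Complex.mul_conj, h00] <;> ring
  rw [traceNorm_of_conjTranspose_mul_self_eq_smul_one hsq, Fintype.card_fin, Nat.cast_ofNat]

lemma piM_eq_diagonal (M : ℝ) : piM M = diagonal fun i => ((![1 - 1 / M, 1 / M] i : ℝ) : ℂ) := by
  ext i j
  fin_cases i <;> fin_cases j <;> rfl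

lemma classicalChannel_ket1 {m : Type*} [DecidableEq m] (P : Matrix (Fin 2) m ℝ) :
    classicalChannel P ket1 = diagonal fun j => (P 1 j : ℂ) := by
  simp [classicalChannel_apply, ket1, vecMul, dotProduct, Fin.sum_univ_two]

lemma isHermitian_ket1 : ket1.IsHermitian := by
  simp [ket1, isHermitian_diagonal_iff]

lemma trace_ket1 : ket1.trace = 1 := by
  simp [ket1]

lemma one_sub_re_le_traceDist_ket1 {σ : Matrix (Fin 2) (Fin 2) ℂ} (hσ : σ.IsHermitian)
    (htr : σ.trace = 1) : 1 - (σ 1 1).re ≤ traceDist σ ket1 := by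
  have hA : (σ - ket1).trace = 0 := by rw [trace_sub, htr, trace_ket1, sub_self]
  rw [traceDist, traceNorm_of_isHermitian_of_trace_eq_zero (hσ.sub isHermitian_ket1) hA]
  have h00 : ((σ - ket1) 0 0).re = 1 - (σ 1 1).re := by
    have := congrArg Complex.re htr
    simp only [trace_fin_two, Complex.add_re, Complex.one_re, ket1, Matrix.sub_apply,
      diagonal_apply_eq, cons_val_zero, sub_zero] at this ⊢
    linarith
  rw [← h00, mul_div_cancel_left₀ _ two_ne_zero]
  exact (le_abs_self _).trans (Real.abs_le_sqrt (le_add_of_nonneg_right (Complex.normSq_nonneg _)))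

lemma traceDist_diagonal_ket1 {p : Fin 2 → ℝ} (hp : 0 ≤ p 0) (hsum : p 0 + p 1 = 1) :
    traceDist (diagonal fun i => (p i : ℂ)) ket1 = p 0 := by
  have hH : (diagonal (fun i => (p i : ℂ)) - ket1).IsHermitian :=
    (isHermitian_diagonal_iff.mpr fun i => Complex.conj_ofReal _).sub isHermitian_ket1
  have htr : (diagonal (fun i => (p i : ℂ)) - ket1).trace = 0 := by
    rw [trace_sub, trace_ket1, trace_diagonal, Fin.sum_univ_two, ← Complex.ofReal_add, hsum,
      Complex.ofReal_one, sub_self]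
  rw [traceDist, traceNorm_of_isHermitian_of_trace_eq_zero hH htr]
  simp [ket1, Real.sqrt_sq hp]

lemma smul_piM_sub_ket1 {M : ℝ} (hM : M ≠ 0) :
    (M : ℂ) • piM M - ket1 = diagonal fun i => ((![M - 1, 0] i : ℝ) : ℂ) := by
  ext i j
  fin_cases i <;> fin_cases j <;> simp [piM, ket1, mul_sub, hM]

lemma re_map_ket1_le_div {F : Matrix (Fin 2) (Fin 2) ℂ →ₗ[ℂ] Matrix (Fin 2) (Fin 2) ℂ}
    (hF : (choiMatrix F).PosSemidef) {M N : ℝ} (hM : 1 ≤ M) (hpi : F (piM M) = piM N) :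
    (F ket1 1 1).re ≤ M / N := by
  have hpos : ((M : ℂ) • piM N - F ket1).PosSemidef := by
    have hX : ((M : ℂ) • piM M - ket1).PosSemidef := by
      rw [smul_piM_sub_ket1 (by linarith)]
      exact .diagonal fun i => Complex.zero_le_real.mpr (by fin_cases i <;> simp [hM])
    simpa only [map_sub, _root_.map_smul, hpi] using
      posSemidef_map_of_posSemidef_choiMatrix F hF hX
  rw [div_eq_mul_inv]
  simpa [piM] using (Complex.le_def.mp (hpos.diag_nonneg (i := 1))).1

lemma mul_one_sub_le_of_isCPTP {F : Matrix (Fin 2) (Fin 2) ℂ →ₗ[ℂ] Matrix (Fin 2) (Fin 2) ℂ}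
    (hF : IsCPTP F) {M N ε : ℝ} (hM : 1 ≤ M) (hN : 0 < N) (hpi : F (piM M) = piM N)
    (hdist : traceDist (F ket1) ket1 ≤ ε) : N * (1 - ε) ≤ M := by
  have hσ := one_sub_re_le_traceDist_ket1
    (isHermitian_map_of_isHermitian_choiMatrix F hF.1.1 isHermitian_ket1)
    (by rw [hF.2, trace_ket1])
  have h : 1 - ε ≤ M / N := by linarith [re_map_ket1_le_div hF.1 hM hpi]
  rwa [le_div_iff₀ hN, mul_comm] at h

lemma exists_isCPTP_of_mul_one_sub_le {M N ε : ℝ} (hM : 1 < M) (hN : 1 ≤ N) (hε : 0 ≤ ε)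
    (h : N * (1 - ε) ≤ M) :
    ∃ F : Matrix (Fin 2) (Fin 2) ℂ →ₗ[ℂ] Matrix (Fin 2) (Fin 2) ℂ,
      IsCPTP F ∧ F (piM M) = piM N ∧ traceDist (F ket1) ket1 ≤ ε := by
  have hM0 : 0 < M := by linarith
  have hN0 : 0 < N := by linarith
  have hM' : 0 < 1 - 1 / M := by linarith [(div_lt_one hM0).2 hM]
  obtain ⟨t, ht0, ht1, htM, htε⟩ : ∃ t : ℝ, 0 ≤ t ∧ t ≤ 1 - 1 / N ∧ 1 - t ≤ M / N ∧ t ≤ ε :=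
    ⟨max 0 (1 - M / N), le_max_left _ _,
      max_le (by linarith [(div_le_one hN0).2 hN])
        (by linarith [div_le_div_of_nonneg_right hM.le hN0.le]),
      by linarith [le_max_right 0 (1 - M / N)],
      max_le hε (by linarith [(le_div_iff₀ hN0).2 (by linarith : (1 - ε) * N ≤ M)])⟩
  obtain ⟨a, ha⟩ : ∃ a, (1 - 1 / M) * a = 1 - 1 / N - t / M :=
    ⟨_, mul_div_cancel₀ _ hM'.ne'⟩
  have ha0 : 0 ≤ a :=
    (mul_nonneg_iff_of_pos_left hM').1 (by linarith [div_le_self ht0 hM.le])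
  have ha1 : a ≤ 1 := by
    refine le_of_mul_le_mul_left ?_ hM'
    have : (1 - t) / M ≤ 1 / N :=
      calc (1 - t) / M ≤ M / N / M := by gcongr
        _ = 1 / N := by field_simp
    linarith [show (1 - t) / M = 1 / M - t / M by ring]
  refine ⟨classicalChannel !![a, 1 - a; t, 1 - t], isCPTP_classicalChannel ?_ ?_, ?_, ?_⟩
  · intro i j
    fin_cases i <;> fin_cases j <;> simp <;> linarith [one_div_nonneg.2 hN0.le]
  · intro i
    fin_cases i <;> simp [Fin.sum_univ_two]
  · have hgibbs : ![1 - 1 / M, 1 / M] ᵥ* !![a, 1 - a; t, 1 - t] = ![1 - 1 / N, 1 / N] := by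
      ext j
      fin_cases j <;> simp [vecMul, dotProduct, Fin.sum_univ_two]
      · linear_combination ha
      · linear_combination -ha
    rw [piM_eq_diagonal, piM_eq_diagonal, classicalChannel_diagonal_ofReal, hgibbs]
  · rw [classicalChannel_ket1, traceDist_diagonal_ket1 (by simpa using ht0) (by simp)]
    simpa using htε

/-- energy truncation for clean batteries under Gibbs-preserving
operations (CPTP maps). -/
theorem stmt_5 (ε M N : ℝ) (hε : ε ∈ Set.Ico (0:ℝ) 1) (hM : 1 < M) (hN : 1 < N) :
    (∃ F : Matrix (Fin 2) (Fin 2) ℂ →ₗ[ℂ] Matrix (Fin 2) (Fin 2) ℂ,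
        IsCPTP F ∧ F (piM M) = piM N ∧ traceDist (F ket1) ket1 ≤ ε) ↔
      M ≥ N * (1 - ε) := by
  constructor
  · rintro ⟨F, hF, hpi, hdist⟩
    exact mul_one_sub_le_of_isCPTP hF hM.le (by linarith) hpi hdist
  · exact exists_isCPTP_of_mul_one_sub_le hM hN.le hε.1
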